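/- Let W : [0,∞) → ℂ be continuous with |W_t| = 1 for all t, and for z in the open unit disk 𝔻 let g_t(z) denote the maximal solution of the radial Loewner equation ∂_t g_t(z) = −g_t(z)(g_t(z) + W_t)/(g_t(z) − W_t), g_0(z) = z, with lifetime τ_z. For each t ≥ 0 the set H_t = {z ∈ 𝔻 : τ_z > t} is open, and the map z ↦ g_t(z) is holomorphic and injective on H_t, with g_t(H_t) ⊆ 𝔻. -/

import Mathlib

/-!
Write `F(ω, w) = -w (w + ω) / (w - ω)`. On `{w : ε ≤ ‖w - ω‖}` with `‖ω‖ = 1`, `F(ω, ·)` is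
`(1 + 2 / ε²)`-Lipschitz, so by Grönwall the trajectories of nearby points stay close as long as
they keep away from the driving point; a continuity argument together with the blow-up condition
at the lifetime shows that this persists up to time `t`, whence `H_t` is open. Backward uniqueness
for the same Lipschitz field gives injectivity. The identity
`Re (conj w * F(ω, w)) = |w|² (1 - |w|²) / |w - ω|²` shows that `1 - |g_s(z)|²` solves a scalar
linear equation, so it stays positive. Finally, if `v` solves the variational equation
`v' = ∂_w F(W, g(z₀)) v`, `v 0 = 1`, Grönwall applied to `g(z₀ + h) - g(z₀) - h v` gives an
`O(|h|²)` error at time `t`, so `g_t` is complex differentiable with derivative `v t`.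
-/

open Set Filter Topology
open scoped ENNReal

theorem IsCompact.exists_pos_forall_le_norm {X E : Type*} [TopologicalSpace X]
    [NormedAddCommGroup E] {K : Set X} {f : X → E} (hK : IsCompact K) (hf : ContinuousOn f K)
    (h0 : ∀ x ∈ K, f x ≠ 0) : ∃ ρ > 0, ∀ x ∈ K, ρ ≤ ‖f x‖ := by
  rcases K.eq_empty_or_nonempty with rfl | hne
  · exact ⟨1, one_pos, by simp⟩
  obtain ⟨x₀, hx₀, hmin⟩ := hK.exists_isMinOn hne hf.norm
  exact ⟨‖f x₀‖, norm_pos_iff.2 (h0 x₀ hx₀), fun x hx => hmin hx⟩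

theorem ContinuousOn.exists_hasDerivAt_Icc {E : Type*} [NormedAddCommGroup E] [NormedSpace ℝ E]
    [CompleteSpace E] {φ : ℝ → E} {a b : ℝ} (hab : a ≤ b) (hφ : ContinuousOn φ (Icc a b)) :
    ∃ Φ : ℝ → E, Φ a = 0 ∧ ∀ s ∈ Icc a b, HasDerivAt Φ (φ s) s := by
  have hext : Continuous fun s => φ (projIcc a b hab s) :=
    hφ.comp_continuous (continuous_subtype_val.comp continuous_projIcc) fun s =>
      (projIcc a b hab s).2
  refine ⟨fun s => ∫ u in a..s, φ (projIcc a b hab u), by simp, fun s hs => ?_⟩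
  simpa [projIcc_of_mem hab hs] using hext.integral_hasStrictDerivAt a s |>.hasDerivAt

theorem pos_of_hasDerivWithinAt_eq_mul {u c : ℝ → ℝ} {a b : ℝ} (hab : a ≤ b)
    (hu : ContinuousOn u (Icc a b)) (hc : ContinuousOn c (Icc a b))
    (hu' : ∀ s ∈ Ico a b, HasDerivWithinAt u (c s * u s) (Ici s) s) (ha : 0 < u a) :
    0 < u b := by
  obtain ⟨C, hC0, hC⟩ := hc.exists_hasDerivAt_Icc hab
  have hconst := constant_of_has_deriv_right_zero (f := fun s => u s * Real.exp (-C s))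
    (hu.mul fun s hs => (hC s hs).neg.exp.continuousAt.continuousWithinAt)
    fun s hs =>
      ((hu' s hs).mul (hC s (Ico_subset_Icc_self hs)).neg.exp.hasDerivWithinAt).congr_deriv
        (by ring)
  have := hconst b (right_mem_Icc.2 hab)
  simp only [hC0, neg_zero, Real.exp_zero, mul_one] at this
  exact pos_of_mul_pos_left (this ▸ ha) (Real.exp_pos _).le

theorem ContinuousOn.forall_lt_of_bootstrap {D : ℝ → ℝ} {a b β : ℝ}
    (hD : ContinuousOn D (Icc a b))
    (h : ∀ s ∈ Icc a b, (∀ u ∈ Ico a s, D u ≤ β) → D s < β) : ∀ s ∈ Icc a b, D s < β := by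
  by_contra! hbad
  set S := {s ∈ Icc a b | β ≤ D s}
  have hne : S.Nonempty := hbad
  have hbdd : BddBelow S := bddBelow_Icc.mono fun _ hs => hs.1
  have hcl : IsClosed S := hD.preimage_isClosed_of_isClosed isClosed_Icc isClosed_Ici
  have hmem : sInf S ∈ S := hcl.csInf_mem hne hbdd
  refine (h _ hmem.1 fun u hu => ?_).not_ge hmem.2
  by_contra! hu'
  exact (notMem_of_lt_csInf hu.2 hbdd) ⟨⟨hu.1, hu.2.le.trans hmem.1.2⟩, hu'.le⟩

theorem hasDerivAt_of_norm_sub_sub_le_sq {𝕜 F : Type*} [NontriviallyNormedField 𝕜]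
    [NormedAddCommGroup F] [NormedSpace 𝕜 F] {f : 𝕜 → F} {f' : F} {x : 𝕜} {r M : ℝ}
    (hr : 0 < r) (h : ∀ y, ‖y - x‖ < r → ‖f y - f x - (y - x) • f'‖ ≤ M * ‖y - x‖ ^ 2) :
    HasDerivAt f f' x := by
  rw [hasDerivAt_iff_isLittleO_nhds_zero]
  have hO : (fun h => f (x + h) - f x - h • f') =O[𝓝 0] fun h => ‖h‖ ^ 2 := by
    refine Asymptotics.IsBigO.of_bound M ?_
    filter_upwards [Metric.ball_mem_nhds 0 hr] with y hy
    simpa using h (x + y) (by simpa using hy)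
  exact hO.trans_isLittleO (Asymptotics.isLittleO_norm_pow_id one_lt_two)

theorem gronwallBound_zero_mul (K c e x : ℝ) :
    gronwallBound 0 K (e * c) x = e * gronwallBound 0 K c x := by
  by_cases hK : K = 0
  · simp [hK, gronwallBound_K0]; ring
  · simp only [gronwallBound_of_K_ne_0 hK]; ring

theorem le_norm_sub_of_two_mul_le {E : Type*} [SeminormedAddCommGroup E] {a b c : E} {ε : ℝ}
    (h : 2 * ε ≤ ‖a - c‖) (hb : ‖b - a‖ ≤ ε) : ε ≤ ‖b - c‖ := by
  have := norm_sub_le_norm_sub_add_norm_sub a b c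
  rw [norm_sub_rev a b] at this
  linarith

noncomputable def radialLoewnerField (ω w : ℂ) : ℂ := -w * (w + ω) / (w - ω)

noncomputable def radialLoewnerFieldDeriv (ω w : ℂ) : ℂ := -1 + 2 * ω ^ 2 / (w - ω) ^ 2

section Field

variable {ω w w₁ w₂ : ℂ} {ε : ℝ}

theorem radialLoewnerField_sub (h₁ : w₁ ≠ ω) (h₂ : w₂ ≠ ω) :
    radialLoewnerField ω w₁ - radialLoewnerField ω w₂ =
      (w₁ - w₂) * (-1 + 2 * ω ^ 2 / ((w₁ - ω) * (w₂ - ω))) := by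
  have h₁' := sub_ne_zero.2 h₁
  have h₂' := sub_ne_zero.2 h₂
  unfold radialLoewnerField
  field_simp
  ring

theorem ne_of_le_norm_sub (hε : 0 < ε) (h : ε ≤ ‖w - ω‖) : w ≠ ω := by
  rintro rfl
  simp at h
  linarith

theorem norm_radialLoewnerField_sub_le (hω : ‖ω‖ = 1) (hε : 0 < ε)
    (h₁ : ε ≤ ‖w₁ - ω‖) (h₂ : ε ≤ ‖w₂ - ω‖) :
    ‖radialLoewnerField ω w₁ - radialLoewnerField ω w₂‖ ≤ (1 + 2 / ε ^ 2) * ‖w₁ - w₂‖ := by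
  rw [radialLoewnerField_sub (ne_of_le_norm_sub hε h₁) (ne_of_le_norm_sub hε h₂), norm_mul,
    mul_comm]
  gcongr
  calc ‖-1 + 2 * ω ^ 2 / ((w₁ - ω) * (w₂ - ω))‖
      ≤ 1 + 2 / (‖w₁ - ω‖ * ‖w₂ - ω‖) := by
        refine (norm_add_le _ _).trans_eq ?_
        simp [hω]
    _ ≤ 1 + 2 / ε ^ 2 := by rw [sq]; gcongr

theorem lipschitzOnWith_radialLoewnerField (hω : ‖ω‖ = 1) (hε : 0 < ε) :
    LipschitzOnWith (1 + 2 / ε ^ 2).toNNReal (radialLoewnerField ω) {w | ε ≤ ‖w - ω‖} :=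
  LipschitzOnWith.of_dist_le' fun _ h₁ _ h₂ => by
    simpa only [dist_eq_norm] using norm_radialLoewnerField_sub_le hω hε h₁ h₂

theorem norm_radialLoewnerFieldDeriv_le (hω : ‖ω‖ = 1) (hε : 0 < ε) (h : ε ≤ ‖w - ω‖) :
    ‖radialLoewnerFieldDeriv ω w‖ ≤ 1 + 2 / ε ^ 2 := by
  have hε' : 0 < ‖w - ω‖ := hε.trans_le h
  calc ‖radialLoewnerFieldDeriv ω w‖ ≤ 1 + 2 / ‖w - ω‖ ^ 2 := by
        refine (norm_add_le _ _).trans_eq ?_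
        simp [hω]
    _ ≤ 1 + 2 / ε ^ 2 := by gcongr

theorem radialLoewnerField_sub_sub_deriv (h₁ : w₁ ≠ ω) (h₂ : w₂ ≠ ω) :
    radialLoewnerField ω w₁ - radialLoewnerField ω w₂ -
        radialLoewnerFieldDeriv ω w₂ * (w₁ - w₂) =
      -2 * ω ^ 2 * (w₁ - w₂) ^ 2 / ((w₁ - ω) * (w₂ - ω) ^ 2) := by
  have h₁' := sub_ne_zero.2 h₁
  have h₂' := sub_ne_zero.2 h₂
  unfold radialLoewnerField radialLoewnerFieldDeriv
  field_simp
  ring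

theorem norm_radialLoewnerField_sub_sub_deriv_le (hω : ‖ω‖ = 1) (hε : 0 < ε)
    (h₁ : ε ≤ ‖w₁ - ω‖) (h₂ : ε ≤ ‖w₂ - ω‖) :
    ‖radialLoewnerField ω w₁ - radialLoewnerField ω w₂ -
        radialLoewnerFieldDeriv ω w₂ * (w₁ - w₂)‖ ≤ 2 / ε ^ 3 * ‖w₁ - w₂‖ ^ 2 := by
  rw [radialLoewnerField_sub_sub_deriv (ne_of_le_norm_sub hε h₁) (ne_of_le_norm_sub hε h₂)]
  have : 0 < ‖w₁ - ω‖ := hε.trans_le h₁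
  calc _ = 2 / (‖w₁ - ω‖ * ‖w₂ - ω‖ ^ 2) * ‖w₁ - w₂‖ ^ 2 := by
        simp [hω, mul_div_assoc, mul_comm]
    _ ≤ 2 / ε ^ 3 * ‖w₁ - w₂‖ ^ 2 := by
        rw [pow_succ' ε 2]
        gcongr

open ComplexConjugate in
theorem inner_radialLoewnerField (hω : ‖ω‖ = 1) (hw : w ≠ ω) :
    inner ℝ w (radialLoewnerField ω w) = ‖w‖ ^ 2 * (1 - ‖w‖ ^ 2) / ‖w - ω‖ ^ 2 := by
  have hw' : w - ω ≠ 0 := sub_ne_zero.2 hw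
  have hn : ‖w - ω‖ ^ 2 ≠ 0 := by positivity
  have key : radialLoewnerField ω w * conj w * (Complex.normSq (w - ω) : ℂ) =
      ((-Complex.normSq w : ℝ) : ℂ) * ((w + ω) * conj (w - ω)) := by
    rw [Complex.ofReal_neg, ← Complex.mul_conj (w - ω), ← Complex.mul_conj w,
      radialLoewnerField]
    field_simp
  have hre : ((w + ω) * conj (w - ω)).re = Complex.normSq w - Complex.normSq ω := by
    simp only [Complex.mul_re, Complex.add_re, Complex.add_im, Complex.conj_re, Complex.conj_im,
      Complex.sub_re, Complex.sub_im, Complex.normSq_apply]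
    ring
  have := congrArg Complex.re key
  rw [Complex.re_mul_ofReal, Complex.re_ofReal_mul, hre] at this
  simp only [Complex.normSq_eq_norm_sq, hω] at this
  rw [Complex.inner, eq_div_iff hn, this]
  ring

end Field

def IsRadialLoewnerCurve (W γ : ℝ → ℂ) (t : ℝ) : Prop :=
  ∀ s ∈ Icc 0 t, γ s ≠ W s ∧ HasDerivWithinAt γ (radialLoewnerField (W s) (γ s)) (Ici 0) s

namespace IsRadialLoewnerCurve

variable {W γ γ₀ γ₁ γ₂ : ℝ → ℂ} {s t : ℝ} {ε : ℝ}

theorem mono (h : IsRadialLoewnerCurve W γ t) {T : ℝ} (hT : T ≤ t) :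
    IsRadialLoewnerCurve W γ T :=
  fun s hs => h s ⟨hs.1, hs.2.trans hT⟩

theorem continuousOn (h : IsRadialLoewnerCurve W γ t) : ContinuousOn γ (Icc 0 t) :=
  fun s hs => (h s hs).2.continuousWithinAt.mono fun _ hu => hu.1

theorem hasDerivWithinAt_Ici (h : IsRadialLoewnerCurve W γ t) (hs : s ∈ Ico 0 t) :
    HasDerivWithinAt γ (radialLoewnerField (W s) (γ s)) (Ici s) s :=
  (h s (Ico_subset_Icc_self hs)).2.mono fun _ hu => hs.1.trans hu

theorem hasDerivAt (h : IsRadialLoewnerCurve W γ t) (hs : s ∈ Ioc 0 t) :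
    HasDerivAt γ (radialLoewnerField (W s) (γ s)) s :=
  (h s (Ioc_subset_Icc_self hs)).2.hasDerivAt (Ici_mem_nhds hs.1)

theorem exists_pos_le_norm_sub (hW : ContinuousOn W (Ici 0)) (h : IsRadialLoewnerCurve W γ t) :
    ∃ ε > 0, ∀ s ∈ Icc 0 t, ε ≤ ‖γ s - W s‖ :=
  isCompact_Icc.exists_pos_forall_le_norm (h.continuousOn.sub (hW.mono Icc_subset_Ici_self))
    fun s hs => sub_ne_zero.2 (h s hs).1

theorem norm_sub_le (hW1 : ∀ s, 0 ≤ s → ‖W s‖ = 1) (hε : 0 < ε)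
    (h₁ : IsRadialLoewnerCurve W γ₁ t) (h₂ : IsRadialLoewnerCurve W γ₂ t)
    (hs₁ : ∀ s ∈ Ico 0 t, ε ≤ ‖γ₁ s - W s‖) (hs₂ : ∀ s ∈ Ico 0 t, ε ≤ ‖γ₂ s - W s‖) :
    ∀ s ∈ Icc 0 t, ‖γ₁ s - γ₂ s‖ ≤ ‖γ₁ 0 - γ₂ 0‖ * Real.exp ((1 + 2 / ε ^ 2) * s) := by
  have := dist_le_of_trajectories_ODE_of_mem (s := fun s => {w | ε ≤ ‖w - W s‖})
    (fun s hs => lipschitzOnWith_radialLoewnerField (hW1 s hs.1) hε) h₁.continuousOn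
    (fun s hs => h₁.hasDerivWithinAt_Ici hs) hs₁ h₂.continuousOn
    (fun s hs => h₂.hasDerivWithinAt_Ici hs) hs₂ le_rfl
  intro s hs
  simpa [dist_eq_norm, Real.coe_toNNReal _ (by positivity : 0 ≤ 1 + 2 / ε ^ 2)] using this s hs

theorem apply_zero_eq_of_apply_eq (hW : ContinuousOn W (Ici 0))
    (hW1 : ∀ s, 0 ≤ s → ‖W s‖ = 1) (ht : 0 ≤ t) (h₁ : IsRadialLoewnerCurve W γ₁ t)
    (h₂ : IsRadialLoewnerCurve W γ₂ t) (heq : γ₁ t = γ₂ t) : γ₁ 0 = γ₂ 0 := by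
  obtain ⟨ε₁, hε₁, hs₁⟩ := h₁.exists_pos_le_norm_sub hW
  obtain ⟨ε₂, hε₂, hs₂⟩ := h₂.exists_pos_le_norm_sub hW
  exact ODE_solution_unique_of_mem_Icc_left (s := fun s => {w | min ε₁ ε₂ ≤ ‖w - W s‖})
    (fun s hs => lipschitzOnWith_radialLoewnerField (hW1 s hs.1.le) (lt_min hε₁ hε₂))
    h₁.continuousOn (fun s hs => (h₁.hasDerivAt hs).hasDerivWithinAt)
    (fun s hs => (min_le_left _ _).trans (hs₁ s (Ioc_subset_Icc_self hs)))
    h₂.continuousOn (fun s hs => (h₂.hasDerivAt hs).hasDerivWithinAt)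
    (fun s hs => (min_le_right _ _).trans (hs₂ s (Ioc_subset_Icc_self hs))) heq ⟨le_rfl, ht⟩

theorem norm_lt_one (hW : ContinuousOn W (Ici 0)) (hW1 : ∀ s, 0 ≤ s → ‖W s‖ = 1) (ht : 0 ≤ t)
    (h : IsRadialLoewnerCurve W γ t) (h0 : ‖γ 0‖ < 1) : ‖γ t‖ < 1 := by
  have hne : ∀ s ∈ Icc 0 t, ‖γ s - W s‖ ^ 2 ≠ 0 := fun s hs =>
    pow_ne_zero 2 (norm_ne_zero_iff.2 (sub_ne_zero.2 (h s hs).1))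
  have hpos := pos_of_hasDerivWithinAt_eq_mul (u := fun s => 1 - ‖γ s‖ ^ 2)
    (c := fun s => -(2 * ‖γ s‖ ^ 2 / ‖γ s - W s‖ ^ 2)) ht
    (continuousOn_const.sub (h.continuousOn.norm.pow 2))
    ((continuousOn_const.mul (h.continuousOn.norm.pow 2)).div
      ((h.continuousOn.sub (hW.mono Icc_subset_Ici_self)).norm.pow 2) hne).neg
    (fun s hs => ((h.hasDerivWithinAt_Ici hs).norm_sq.const_sub 1).congr_deriv (by
      rw [inner_radialLoewnerField (hW1 s hs.1) (h s (Ico_subset_Icc_self hs)).1]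
      field_simp [hne s (Ico_subset_Icc_self hs)]))
    (by nlinarith [norm_nonneg (γ 0)])
  nlinarith [norm_nonneg (γ t)]

theorem norm_sub_lt (hW1 : ∀ s, 0 ≤ s → ‖W s‖ = 1) (hε : 0 < ε)
    (h₀ : IsRadialLoewnerCurve W γ₀ t) (h₁ : IsRadialLoewnerCurve W γ₁ t)
    (hsep : ∀ s ∈ Icc 0 t, 2 * ε ≤ ‖γ₀ s - W s‖)
    (hd : ‖γ₁ 0 - γ₀ 0‖ * Real.exp ((1 + 2 / ε ^ 2) * t) < ε) :
    ∀ s ∈ Icc 0 t, ‖γ₁ s - γ₀ s‖ < ε := by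
  refine (h₁.continuousOn.sub h₀.continuousOn).norm.forall_lt_of_bootstrap fun s hs hle => ?_
  have hsep' : ∀ u ∈ Ico 0 s, 2 * ε ≤ ‖γ₀ u - W u‖ := fun u hu =>
    hsep u ⟨hu.1, hu.2.le.trans hs.2⟩
  calc ‖γ₁ s - γ₀ s‖
      ≤ ‖γ₁ 0 - γ₀ 0‖ * Real.exp ((1 + 2 / ε ^ 2) * s) :=
        (h₁.mono hs.2).norm_sub_le hW1 hε (h₀.mono hs.2)
          (fun u hu => le_norm_sub_of_two_mul_le (hsep' u hu) (hle u hu))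
          (fun u hu => by linarith [hsep' u hu]) s (right_mem_Icc.2 hs.1)
    _ ≤ ‖γ₁ 0 - γ₀ 0‖ * Real.exp ((1 + 2 / ε ^ 2) * t) := by gcongr; exact hs.2
    _ < ε := hd

theorem norm_sub_sub_mul_le (hW1 : ∀ s, 0 ≤ s → ‖W s‖ = 1) (ht : 0 ≤ t) (hε : 0 < ε)
    (h₀ : IsRadialLoewnerCurve W γ₀ t) (h₁ : IsRadialLoewnerCurve W γ₁ t)
    (hs₀ : ∀ s ∈ Ico 0 t, ε ≤ ‖γ₀ s - W s‖) (hs₁ : ∀ s ∈ Ico 0 t, ε ≤ ‖γ₁ s - W s‖) {δ : ℝ}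
    (hδ : ∀ s ∈ Ico 0 t, ‖γ₁ s - γ₀ s‖ ≤ δ) {v : ℝ → ℂ} (hv0 : v 0 = 1)
    (hv : ∀ s ∈ Icc 0 t, HasDerivAt v (radialLoewnerFieldDeriv (W s) (γ₀ s) * v s) s) :
    ‖γ₁ t - γ₀ t - (γ₁ 0 - γ₀ 0) * v t‖ ≤
      δ ^ 2 * gronwallBound 0 (1 + 2 / ε ^ 2) (2 / ε ^ 3) t := by
  set d := γ₁ 0 - γ₀ 0
  set a := fun s => radialLoewnerFieldDeriv (W s) (γ₀ s)
  have hbound : ∀ s ∈ Ico 0 t,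
      ‖radialLoewnerField (W s) (γ₁ s) - radialLoewnerField (W s) (γ₀ s) - d * (a s * v s)‖ ≤
        (1 + 2 / ε ^ 2) * ‖γ₁ s - γ₀ s - d * v s‖ + 2 / ε ^ 3 * δ ^ 2 := by
    intro s hs
    have hWs := hW1 s hs.1
    have hδs : ‖γ₁ s - γ₀ s‖ ^ 2 ≤ δ ^ 2 := pow_le_pow_left₀ (norm_nonneg _) (hδ s hs) 2
    calc _ = ‖a s * (γ₁ s - γ₀ s - d * v s) + (radialLoewnerField (W s) (γ₁ s) -
            radialLoewnerField (W s) (γ₀ s) - a s * (γ₁ s - γ₀ s))‖ := by ring_nf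
      _ ≤ ‖a s‖ * ‖γ₁ s - γ₀ s - d * v s‖ + 2 / ε ^ 3 * ‖γ₁ s - γ₀ s‖ ^ 2 :=
        (norm_add_le _ _).trans (add_le_add (norm_mul_le _ _)
          (norm_radialLoewnerField_sub_sub_deriv_le hWs hε (hs₁ s hs) (hs₀ s hs)))
      _ ≤ _ := by
        gcongr
        exact norm_radialLoewnerFieldDeriv_le hWs hε (hs₀ s hs)
  have := norm_le_gronwallBound_of_norm_deriv_right_le (f := fun s => γ₁ s - γ₀ s - d * v s)
    (δ := 0) ((h₁.continuousOn.sub h₀.continuousOn).sub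
      (continuousOn_const.mul fun s hs => (hv s hs).continuousAt.continuousWithinAt))
    (fun s hs => ((h₁.hasDerivWithinAt_Ici hs).sub (h₀.hasDerivWithinAt_Ici hs)).sub
      (((hv s (Ico_subset_Icc_self hs)).hasDerivWithinAt).const_mul d))
    (by simp [d, hv0]) hbound t ⟨ht, le_rfl⟩
  rwa [sub_zero, mul_comm _ (δ ^ 2), gronwallBound_zero_mul] at this

end IsRadialLoewnerCurve

structure IsRadialLoewnerFlow (W : ℝ → ℂ) (g : ℝ → ℂ → ℂ) (τ : ℂ → ℝ≥0∞) : Prop where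
  continuousOn : ContinuousOn W (Ici 0)
  norm_eq_one : ∀ t, 0 ≤ t → ‖W t‖ = 1
  lifetime_pos : ∀ z : ℂ, ‖z‖ < 1 → 0 < τ z
  apply_zero : ∀ z : ℂ, ‖z‖ < 1 → g 0 z = z
  ode : ∀ z : ℂ, ‖z‖ < 1 → ∀ t : ℝ, 0 ≤ t → ENNReal.ofReal t < τ z →
    g t z ≠ W t ∧ HasDerivWithinAt (fun s => g s z) (radialLoewnerField (W t) (g t z)) (Ici 0) t
  tendsto_lifetime : ∀ z : ℂ, ‖z‖ < 1 → τ z ≠ ⊤ →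
    Tendsto (fun t => g t z - W t) (𝓝[<] (τ z).toReal) (𝓝 0)

def radialLoewnerDomain (τ : ℂ → ℝ≥0∞) (t : ℝ) : Set ℂ :=
  {z | ‖z‖ < 1 ∧ ENNReal.ofReal t < τ z}

namespace IsRadialLoewnerFlow

variable {W : ℝ → ℂ} {g : ℝ → ℂ → ℂ} {τ : ℂ → ℝ≥0∞} {z z₀ : ℂ} {t ε : ℝ}

theorem isRadialLoewnerCurve (hF : IsRadialLoewnerFlow W g τ) (hz : ‖z‖ < 1)
    (hτ : ENNReal.ofReal t < τ z) :
    IsRadialLoewnerCurve W (fun s => g s z) t :=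
  fun s hs => hF.ode z hz s hs.1 ((ENNReal.ofReal_le_ofReal hs.2).trans_lt hτ)

theorem lt_lifetime (hF : IsRadialLoewnerFlow W g τ) (hz : ‖z‖ < 1) (ht : 0 ≤ t) (hε : 0 < ε)
    (hsep : ∀ s, 0 ≤ s → s ≤ t → ENNReal.ofReal s < τ z → ε ≤ ‖g s z - W s‖) :
    ENNReal.ofReal t < τ z := by
  by_contra! hτ
  have hτ_ne : τ z ≠ ⊤ := ne_top_of_le_ne_top ENNReal.ofReal_ne_top hτ
  have hpos : 0 < (τ z).toReal := ENNReal.toReal_pos (hF.lifetime_pos z hz).ne' hτ_ne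
  have hnear : ∀ᶠ s in 𝓝[<] (τ z).toReal, ‖g s z - W s‖ < ε := by
    simpa using (hF.tendsto_lifetime z hz hτ_ne).norm.eventually_lt_const (by simpa using hε)
  obtain ⟨s, hs, hs0, hsτ⟩ := (hnear.and (Ioo_mem_nhdsLT hpos)).exists
  have hsτ' : ENNReal.ofReal s < τ z := by
    simpa [ENNReal.ofReal_toReal hτ_ne] using (ENNReal.ofReal_lt_ofReal_iff hpos).2 hsτ
  exact (hsep s hs0.le (hsτ.le.trans (ENNReal.toReal_le_of_le_ofReal ht hτ)) hsτ').not_gt hs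

theorem exists_tube (hF : IsRadialLoewnerFlow W g τ) (ht : 0 ≤ t) (hz₀ : ‖z₀‖ < 1)
    (hτ₀ : ENNReal.ofReal t < τ z₀) :
    ∃ ε > 0, ∃ C r : ℝ, 0 < r ∧ ∀ z, ‖z - z₀‖ < r → ‖z‖ < 1 ∧ ENNReal.ofReal t < τ z ∧
      ∀ s ∈ Icc 0 t, ε ≤ ‖g s z - W s‖ ∧ ‖g s z - g s z₀‖ ≤ C * ‖z - z₀‖ := by
  obtain ⟨ρ, hρ, hsep⟩ :=
    (hF.isRadialLoewnerCurve hz₀ hτ₀).exists_pos_le_norm_sub hF.continuousOn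
  obtain ⟨ε, hε, hsep⟩ : ∃ ε > 0, ∀ s ∈ Icc 0 t, 2 * ε ≤ ‖g s z₀ - W s‖ :=
    ⟨ρ / 2, by positivity, fun s hs => by linarith [hsep s hs]⟩
  set K := 1 + 2 / ε ^ 2
  refine ⟨ε, hε, Real.exp (K * t), min (1 - ‖z₀‖) (ε / Real.exp (K * t)),
    lt_min (by linarith) (by positivity), fun z hz => ?_⟩
  have hz1 : ‖z‖ < 1 := by
    linarith [norm_le_norm_add_norm_sub' z z₀, hz.trans_le (min_le_left _ _)]
  have hd : ‖g 0 z - g 0 z₀‖ * Real.exp (K * t) < ε := by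
    rw [hF.apply_zero z hz1, hF.apply_zero z₀ hz₀, ← lt_div_iff₀ (Real.exp_pos _)]
    exact hz.trans_le (min_le_right _ _)
  have hτ₀' : ∀ {T}, T ≤ t → ENNReal.ofReal T < τ z₀ := fun hT =>
    (ENNReal.ofReal_le_ofReal hT).trans_lt hτ₀
  have hclose : ∀ T, T ≤ t → ENNReal.ofReal T < τ z →
      ∀ s ∈ Icc 0 T, ‖g s z - g s z₀‖ < ε := fun T hT hτ =>
    (hF.isRadialLoewnerCurve hz₀ (hτ₀' hT)).norm_sub_lt hF.norm_eq_one hε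
      (hF.isRadialLoewnerCurve hz1 hτ) (fun s hs => hsep s ⟨hs.1, hs.2.trans hT⟩)
      (lt_of_le_of_lt (by gcongr) hd)
  have hτ : ENNReal.ofReal t < τ z := hF.lt_lifetime hz1 ht hε fun s hs0 hst hτs =>
    le_norm_sub_of_two_mul_le (hsep s ⟨hs0, hst⟩) (hclose s hst hτs s ⟨hs0, le_rfl⟩).le
  have hsep₁ : ∀ s ∈ Icc 0 t, ε ≤ ‖g s z - W s‖ := fun s hs =>
    le_norm_sub_of_two_mul_le (hsep s hs) (hclose t le_rfl hτ s hs).le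
  refine ⟨hz1, hτ, fun s hs => ⟨hsep₁ s hs, ?_⟩⟩
  calc ‖g s z - g s z₀‖ ≤ ‖g 0 z - g 0 z₀‖ * Real.exp (K * s) :=
        (hF.isRadialLoewnerCurve hz1 hτ).norm_sub_le hF.norm_eq_one hε
          (hF.isRadialLoewnerCurve hz₀ hτ₀) (fun u hu => hsep₁ u (Ico_subset_Icc_self hu))
          (fun u hu => by linarith [hsep u (Ico_subset_Icc_self hu)]) s hs
    _ ≤ Real.exp (K * t) * ‖z - z₀‖ := by
        rw [hF.apply_zero z hz1, hF.apply_zero z₀ hz₀, mul_comm]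
        gcongr
        exact hs.2

theorem isOpen_radialLoewnerDomain (hF : IsRadialLoewnerFlow W g τ) (ht : 0 ≤ t) :
    IsOpen (radialLoewnerDomain τ t) := by
  refine Metric.isOpen_iff.2 fun z₀ ⟨hz₀, hτ₀⟩ => ?_
  obtain ⟨_, _, _, r, hr, htube⟩ := hF.exists_tube ht hz₀ hτ₀
  exact ⟨r, hr, fun z hz => ⟨(htube z (mem_ball_iff_norm.1 hz)).1,
    (htube z (mem_ball_iff_norm.1 hz)).2.1⟩⟩

theorem differentiableAt (hF : IsRadialLoewnerFlow W g τ) (ht : 0 ≤ t) (hz₀ : ‖z₀‖ < 1)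
    (hτ₀ : ENNReal.ofReal t < τ z₀) : DifferentiableAt ℂ (g t) z₀ := by
  obtain ⟨ε, hε, C, r, hr, htube⟩ := hF.exists_tube ht hz₀ hτ₀
  have h₀ := hF.isRadialLoewnerCurve hz₀ hτ₀
  have hsep₀ : ∀ s ∈ Ico 0 t, ε ≤ ‖g s z₀ - W s‖ := fun s hs =>
    ((htube z₀ (by simpa using hr)).2.2 s (Ico_subset_Icc_self hs)).1
  have hWc := hF.continuousOn.mono (Icc_subset_Ici_self : Icc 0 t ⊆ Ici 0)
  obtain ⟨A, hA0, hA⟩ := ContinuousOn.exists_hasDerivAt_Icc ht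
    (φ := fun s => radialLoewnerFieldDeriv (W s) (g s z₀))
    (continuousOn_const.add ((continuousOn_const.mul (hWc.pow 2)).div
      ((h₀.continuousOn.sub hWc).pow 2) fun s hs => pow_ne_zero 2 (sub_ne_zero.2 (h₀ s hs).1)))
  refine (hasDerivAt_of_norm_sub_sub_le_sq (f' := Complex.exp (A t))
    (M := C ^ 2 * gronwallBound 0 (1 + 2 / ε ^ 2) (2 / ε ^ 3) t) hr
    fun z hz => ?_).differentiableAt
  obtain ⟨hz1, hτ, htube⟩ := htube z hz
  have := h₀.norm_sub_sub_mul_le hF.norm_eq_one ht hε (hF.isRadialLoewnerCurve hz1 hτ) hsep₀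
    (fun s hs => (htube s (Ico_subset_Icc_self hs)).1)
    (fun s hs => (htube s (Ico_subset_Icc_self hs)).2) (v := fun s => Complex.exp (A s))
    (by simp [hA0]) fun s hs => (hA s hs).cexp.congr_deriv (mul_comm _ _)
  rw [hF.apply_zero z hz1, hF.apply_zero z₀ hz₀] at this
  rw [smul_eq_mul]
  linarith

theorem differentiableOn (hF : IsRadialLoewnerFlow W g τ) (ht : 0 ≤ t) :
    DifferentiableOn ℂ (g t) (radialLoewnerDomain τ t) :=
  fun _ hz => (hF.differentiableAt ht hz.1 hz.2).differentiableWithinAt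

theorem injOn (hF : IsRadialLoewnerFlow W g τ) (ht : 0 ≤ t) :
    InjOn (g t) (radialLoewnerDomain τ t) := by
  rintro z₁ ⟨h₁, hτ₁⟩ z₂ ⟨h₂, hτ₂⟩ heq
  simpa only [hF.apply_zero z₁ h₁, hF.apply_zero z₂ h₂] using
    (hF.isRadialLoewnerCurve h₁ hτ₁).apply_zero_eq_of_apply_eq hF.continuousOn hF.norm_eq_one ht
      (hF.isRadialLoewnerCurve h₂ hτ₂) heq

theorem mapsTo (hF : IsRadialLoewnerFlow W g τ) (ht : 0 ≤ t) :
    MapsTo (g t) (radialLoewnerDomain τ t) {z | ‖z‖ < 1} := fun z ⟨hz, hτ⟩ =>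
  (hF.isRadialLoewnerCurve hz hτ).norm_lt_one hF.continuousOn hF.norm_eq_one ht
    (by simpa only [hF.apply_zero z hz] using hz)

end IsRadialLoewnerFlow

/-- For the radial Loewner flow `g t z` in the unit disk with continuous driving
term `W` on the unit circle (maximal solutions with lifetimes `τ z`), for each
`t ≥ 0` the set `H_t = {z ∈ 𝔻 : τ_z > t}` is open, and `z ↦ g t z` is holomorphic
and injective on `H_t`, mapping `H_t` into the unit disk. -/
theorem radial_loewner_flow_holomorphic_injective
    (W : ℝ → ℂ) (hW : ContinuousOn W (Set.Ici (0 : ℝ)))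
    (hW1 : ∀ t : ℝ, 0 ≤ t → ‖W t‖ = 1)
    (g : ℝ → ℂ → ℂ) (τ : ℂ → ℝ≥0∞)
    (hτpos : ∀ z : ℂ, ‖z‖ < 1 → 0 < τ z)
    (hg0 : ∀ z : ℂ, ‖z‖ < 1 → g 0 z = z)
    (hode : ∀ z : ℂ, ‖z‖ < 1 → ∀ t : ℝ, 0 ≤ t → ENNReal.ofReal t < τ z →
      g t z ≠ W t ∧
        HasDerivWithinAt (fun s => g s z)
          (-g t z * (g t z + W t) / (g t z - W t)) (Set.Ici (0 : ℝ)) t)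
    (hmax : ∀ z : ℂ, ‖z‖ < 1 → τ z ≠ ⊤ →
      Tendsto (fun t : ℝ => g t z - W t) (𝓝[<] (τ z).toReal) (𝓝 0)) :
    ∀ t : ℝ, 0 ≤ t →
      IsOpen {z : ℂ | ‖z‖ < 1 ∧ ENNReal.ofReal t < τ z} ∧
      DifferentiableOn ℂ (g t) {z : ℂ | ‖z‖ < 1 ∧ ENNReal.ofReal t < τ z} ∧
      Set.InjOn (g t) {z : ℂ | ‖z‖ < 1 ∧ ENNReal.ofReal t < τ z} ∧
      Set.MapsTo (g t) {z : ℂ | ‖z‖ < 1 ∧ ENNReal.ofReal t < τ z}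
        {z : ℂ | ‖z‖ < 1} := by
  have hF : IsRadialLoewnerFlow W g τ := ⟨hW, hW1, hτpos, hg0, hode, hmax⟩
  intro t ht
  exact ⟨hF.isOpen_radialLoewnerDomain ht, hF.differentiableOn ht, hF.injOn ht, hF.mapsTo ht⟩
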